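/- arXiv:2210.08805 — 2 statements merged into one kernel-verified Lean document; each statement's English description precedes it below -/
import Mathlib

section
/- Let X be an Archimedean vector lattice. A subspace of codimension 1 in X is a uniformly closed sublattice if and only if it is the kernel of a difference of two real-valued lattice homomorphisms on X. -/
/-- Relative uniform convergence closedness: `A` is uniformly closed if it contains the
limit of every sequence in `A` that converges relatively uniformly (with regulator `e`). -/
def RUClosed {X : Type*} [AddCommGroup X] [Lattice X] [Module ℝ X] (A : Set X) : Prop :=
  ∀ (x : X) (a : ℕ → X) (e : X), 0 ≤ e → (∀ n, a n ∈ A) →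
    (∀ ε : ℝ, 0 < ε → ∃ N, ∀ n ≥ N, |a n - x| ≤ ε • e) → x ∈ A

/-- A linear functional is order bounded if it is bounded on every order interval. -/
def OrderBoundedFunc {X : Type*} [AddCommGroup X] [Lattice X] [Module ℝ X]
    (φ : X →ₗ[ℝ] ℝ) : Prop :=
  ∀ a b : X, ∃ M : ℝ, ∀ x : X, a ≤ x → x ≤ b → |φ x| ≤ M

/-- A submodule is a (vector) sublattice if it is closed under finite suprema. -/
def IsVectorSublattice {X : Type*} [AddCommGroup X] [Lattice X] [Module ℝ X]
    (Y : Submodule ℝ X) : Prop :=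
  ∀ x ∈ Y, ∀ y ∈ Y, x ⊔ y ∈ Y

/-- A submodule is an order ideal if it is solid. -/
def IsOrderIdeal {X : Type*} [AddCommGroup X] [Lattice X] [Module ℝ X]
    (J : Submodule ℝ X) : Prop :=
  ∀ x y : X, |x| ≤ |y| → y ∈ J → x ∈ J

/-- The Archimedean property for a vector lattice. -/
def ArchimedeanVL (X : Type*) [AddCommGroup X] [Lattice X] [Module ℝ X] : Prop :=
  ∀ x y : X, 0 ≤ x → (∀ n : ℕ, n • x ≤ y) → x = 0

/-!
A codimension-one subspace is `ker f` for a nonzero functional `f`. Uniform closedness of `ker f`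
forces `f` to be order bounded, so `f = f⁺ - (-f)⁺` with the Riesz–Kantorovich positive parts
`f⁺ x = sup f [0, x]`. If `ker f` is a sublattice, `f` cannot be positive on two disjoint positive
elements `a, b`: the kernel element `f b • a - f a • b` has positive part `f b • a`. Hence `f⁺`
cannot be positive on two disjoint positive elements, which makes it a lattice homomorphism, and
likewise for `(-f)⁺`. Conversely, the kernel of a difference of lattice homomorphisms `φ - ψ` is
clearly a sublattice, and it is uniformly closed because `|(φ - ψ) x| ≤ (φ + ψ) |x|`.
-/

open Set Filter Topology
open scoped Pointwise

section LatticeOrderedGroup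

variable {G : Type*} [AddCommGroup G] [Lattice G] [IsOrderedAddMonoid G]

lemma posPart_sub_of_inf_eq_zero {a b : G} (hab : a ⊓ b = 0) : (a - b)⁺ = a := by
  rw [posPart_def, ← sub_self b, ← sup_sub, ← zero_add (a ⊔ b), ← hab, inf_add_sup,
    add_sub_cancel_right]

/-- The Riesz decomposition property. -/
lemma Icc_zero_add_Icc_zero {x y : G} (hx : 0 ≤ x) (hy : 0 ≤ y) :
    Icc 0 x + Icc 0 y = Icc 0 (x + y) := by
  refine (Icc_add_Icc_subset 0 x 0 y).trans_eq (by rw [zero_add]) |>.antisymm ?_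
  rintro z ⟨hz0, hzxy⟩
  have hdiff : z - z ⊓ x = 0 ⊔ (z - x) := by
    rw [sub_eq_add_neg, neg_inf, add_sup, ← sub_eq_add_neg, ← sub_eq_add_neg, sub_self]
  refine ⟨z ⊓ x, ⟨le_inf hz0 hx, inf_le_right⟩, z - z ⊓ x, ⟨?_, ?_⟩, add_sub_cancel _ _⟩
  · exact hdiff ▸ le_sup_left
  · exact hdiff ▸ sup_le hy (sub_le_iff_le_add.2 (hzxy.trans_eq (add_comm x y)))

lemma apply_posPart_sub_apply_negPart {p : G → ℝ}
    (hadd : ∀ x y, 0 ≤ x → 0 ≤ y → p (x + y) = p x + p y) {a b : G} (ha : 0 ≤ a) (hb : 0 ≤ b) :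
    p (a - b)⁺ - p (a - b)⁻ = p a - p b := by
  have h : (a - b)⁺ + b = a + (a - b)⁻ := by
    rw [← sub_eq_sub_iff_add_eq_add, posPart_sub_negPart]
  have := congrArg p h
  rw [hadd _ _ (posPart_nonneg _) hb, hadd _ _ ha (negPart_nonneg _)] at this
  linarith

end LatticeOrderedGroup

lemma smul_Icc_zero {X : Type*} [AddCommGroup X] [PartialOrder X] [Module ℝ X] [PosSMulMono ℝ X]
    {c : ℝ} (hc : 0 < c) (x : X) : c • Icc 0 x = Icc 0 (c • x) := by
  simpa [← image_smul] using (OrderIso.smulRight hc).image_Icc 0 x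

section VectorLattice

variable {X : Type*} [AddCommGroup X] [Lattice X] [IsOrderedAddMonoid X] [Module ℝ X]
  [PosSMulMono ℝ X]

lemma abs_smul_of_nonneg {w : X} (hw : 0 ≤ w) (c : ℝ) : |c • w| = |c| • w := by
  rcases le_total 0 c with hc | hc
  · rw [abs_of_nonneg (smul_nonneg hc hw), abs_of_nonneg hc]
  · rw [abs_of_nonpos (smul_nonpos_of_nonpos_of_nonneg hc hw), abs_of_nonpos hc, neg_smul]

lemma smul_inf_smul_eq_zero {a b : X} (ha : 0 ≤ a) (hb : 0 ≤ b) (hab : a ⊓ b = 0)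
    {c d : ℝ} (hc : 0 < c) (hd : 0 < d) : c • a ⊓ d • b = 0 := by
  have hm : 0 < max c d := lt_max_of_lt_left hc
  refine le_antisymm ?_ (le_inf (smul_nonneg hc.le ha) (smul_nonneg hd.le hb))
  calc c • a ⊓ d • b ≤ max c d • a ⊓ max c d • b :=
        inf_le_inf (smul_le_smul_of_nonneg_right (le_max_left c d) ha)
          (smul_le_smul_of_nonneg_right (le_max_right c d) hb)
    _ = max c d • (a ⊓ b) := ((OrderIso.smulRight hm).map_inf a b).symm
    _ = 0 := by rw [hab, smul_zero]

def linearExtensionOfNonneg (p : X → ℝ) (hadd : ∀ x y, 0 ≤ x → 0 ≤ y → p (x + y) = p x + p y)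
    (hsmul : ∀ c : ℝ, 0 ≤ c → ∀ x, 0 ≤ x → p (c • x) = c * p x) : X →ₗ[ℝ] ℝ where
  toFun x := p x⁺ - p x⁻
  map_add' x y := by
    have hxy : x + y = (x⁺ + y⁺) - (x⁻ + y⁻) := by
      rw [add_sub_add_comm, posPart_sub_negPart, posPart_sub_negPart]
    rw [hxy, apply_posPart_sub_apply_negPart hadd
      (add_nonneg (posPart_nonneg x) (posPart_nonneg y))
      (add_nonneg (negPart_nonneg x) (negPart_nonneg y)),
      hadd _ _ (posPart_nonneg x) (posPart_nonneg y),
      hadd _ _ (negPart_nonneg x) (negPart_nonneg y)]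
    ring
  map_smul' c x := by
    rcases le_total 0 c with hc | hc
    · have hcx : c • x = c • x⁺ - c • x⁻ := by rw [← smul_sub, posPart_sub_negPart]
      rw [hcx, apply_posPart_sub_apply_negPart hadd (smul_nonneg hc (posPart_nonneg x))
        (smul_nonneg hc (negPart_nonneg x)), hsmul c hc _ (posPart_nonneg x),
        hsmul c hc _ (negPart_nonneg x), RingHom.id_apply, smul_eq_mul, mul_sub]
    · have hc' : 0 ≤ -c := neg_nonneg.2 hc
      have hcx : c • x = (-c) • x⁻ - (-c) • x⁺ := by
        rw [← smul_sub, neg_smul, ← smul_neg, neg_sub, posPart_sub_negPart]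
      rw [hcx, apply_posPart_sub_apply_negPart hadd (smul_nonneg hc' (negPart_nonneg x))
        (smul_nonneg hc' (posPart_nonneg x)), hsmul _ hc' _ (posPart_nonneg x),
        hsmul _ hc' _ (negPart_nonneg x), RingHom.id_apply, smul_eq_mul]
      ring

lemma linearExtensionOfNonneg_apply_of_nonneg {p : X → ℝ} {hadd hsmul} {x : X} (hx : 0 ≤ x) :
    linearExtensionOfNonneg p hadd hsmul x = p x := by
  have hp0 : p 0 = 0 := by simpa using hadd 0 0 le_rfl le_rfl
  have h := apply_posPart_sub_apply_negPart hadd hx le_rfl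
  rwa [sub_zero, hp0, sub_zero] at h

end VectorLattice

section LatticeHom

variable {X : Type*} [AddCommGroup X] [Lattice X] [Module ℝ X] {φ ψ : X →ₗ[ℝ] ℝ}

lemma monotone_of_map_sup (hφ : ∀ x y, φ (x ⊔ y) = max (φ x) (φ y)) : Monotone φ := by
  intro x y hxy
  rw [← sup_eq_right.2 hxy, hφ]
  exact le_max_left _ _

lemma abs_apply_of_map_sup (hφ : ∀ x y, φ (x ⊔ y) = max (φ x) (φ y)) (x : X) :
    |φ x| = φ |x| := by
  rw [abs_eq_max_neg, ← map_neg, ← hφ]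
  rfl

lemma isVectorSublattice_ker_sub (hφ : ∀ x y, φ (x ⊔ y) = max (φ x) (φ y))
    (hψ : ∀ x y, ψ (x ⊔ y) = max (ψ x) (ψ y)) : IsVectorSublattice (LinearMap.ker (φ - ψ)) := by
  intro x hx y hy
  simp only [LinearMap.mem_ker, LinearMap.sub_apply, sub_eq_zero] at hx hy ⊢
  rw [hφ, hψ, hx, hy]

lemma ruClosed_ker_of_abs_le (hψ : Monotone ψ) (hφψ : ∀ x, |φ x| ≤ ψ |x|) :
    RUClosed (LinearMap.ker φ : Set X) := by
  intro x a e he ha hconv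
  have hbound : ∀ ε > 0, |φ x| ≤ ε * ψ e := fun ε hε => by
    obtain ⟨N, hN⟩ := hconv ε hε
    calc |φ x| = |φ (a N - x)| := by rw [map_sub, LinearMap.mem_ker.1 (ha N), zero_sub, abs_neg]
      _ ≤ ψ |a N - x| := hφψ _
      _ ≤ ψ (ε • e) := hψ (hN N le_rfl)
      _ = ε * ψ e := by rw [map_smul, smul_eq_mul]
  have hlim : Tendsto (fun ε : ℝ => ε * ψ e) (𝓝[>] 0) (𝓝 0) := by
    have := (tendsto_id (x := 𝓝 (0 : ℝ))).mul_const (ψ e)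
    simpa using this.mono_left nhdsWithin_le_nhds
  exact LinearMap.mem_ker.2 (abs_nonpos_iff.1
    (ge_of_tendsto hlim (eventually_nhdsWithin_of_forall hbound)))

lemma ruClosed_ker_sub (hφ : ∀ x y, φ (x ⊔ y) = max (φ x) (φ y))
    (hψ : ∀ x y, ψ (x ⊔ y) = max (ψ x) (ψ y)) : RUClosed (LinearMap.ker (φ - ψ) : Set X) := by
  refine ruClosed_ker_of_abs_le (ψ := φ + ψ)
    ((monotone_of_map_sup hφ).add (monotone_of_map_sup hψ)) fun x => ?_
  rw [LinearMap.sub_apply, LinearMap.add_apply, ← abs_apply_of_map_sup hφ,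
    ← abs_apply_of_map_sup hψ]
  exact abs_sub _ _

variable [IsOrderedAddMonoid X]

lemma map_sup_eq_max_of_disjoint (hpos : ∀ x, 0 ≤ x → 0 ≤ φ x)
    (hdisj : ∀ a b, 0 ≤ a → 0 ≤ b → a ⊓ b = 0 → φ a = 0 ∨ φ b = 0) (x y : X) :
    φ (x ⊔ y) = max (φ x) (φ y) := by
  have hposPart : ∀ z, φ z⁺ = max (φ z) 0 := by
    intro z
    have hz : φ z = φ z⁺ - φ z⁻ := by rw [← map_sub, posPart_sub_negPart]
    rcases hdisj _ _ (posPart_nonneg z) (negPart_nonneg z) (posPart_inf_negPart_eq_zero z)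
      with h | h
    · rw [h, max_eq_right (by linarith [hpos _ (negPart_nonneg z)])]
    · rw [max_eq_left (by linarith [hpos _ (posPart_nonneg z)])]
      linarith
  rw [sup_eq_add_posPart_sub, map_add, hposPart, map_sub, add_comm, ← max_add_add_right,
    sub_add_cancel, zero_add]

end LatticeHom

section RieszKantorovich

variable {X : Type*} [AddCommGroup X] [Lattice X] [Module ℝ X] {f : X →ₗ[ℝ] ℝ}

lemma OrderBoundedFunc.bddAbove_image_Icc (hf : OrderBoundedFunc f) (a b : X) :
    BddAbove (f '' Icc a b) := by
  obtain ⟨M, hM⟩ := hf a b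
  exact ⟨M, forall_mem_image.2 fun x hx => (le_abs_self _).trans (hM x hx.1 hx.2)⟩

lemma OrderBoundedFunc.neg (hf : OrderBoundedFunc f) : OrderBoundedFunc (-f) := by
  intro a b
  obtain ⟨M, hM⟩ := hf a b
  exact ⟨M, fun x hax hxb => by simpa using hM x hax hxb⟩

variable (f) in
noncomputable def supIcc (x : X) : ℝ := sSup (f '' Icc 0 x)

lemma le_supIcc (hf : OrderBoundedFunc f) {x z : X} (hz : z ∈ Icc 0 x) : f z ≤ supIcc f x :=
  le_csSup (hf.bddAbove_image_Icc 0 x) (mem_image_of_mem f hz)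

lemma supIcc_le {x : X} (hx : 0 ≤ x) {M : ℝ} (h : ∀ z ∈ Icc 0 x, f z ≤ M) : supIcc f x ≤ M :=
  csSup_le ((nonempty_Icc.2 hx).image f) (forall_mem_image.2 h)

lemma supIcc_smul [PosSMulMono ℝ X] {c : ℝ} (hc : 0 ≤ c) (x : X) :
    supIcc f (c • x) = c * supIcc f x := by
  rcases hc.eq_or_lt with rfl | hc
  · simp [supIcc]
  · rw [supIcc, ← smul_Icc_zero hc, image_smul_set, Real.sSup_smul_of_nonneg hc.le, smul_eq_mul]
    rfl

variable [IsOrderedAddMonoid X]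

lemma supIcc_add (hf : OrderBoundedFunc f) {x y : X} (hx : 0 ≤ x) (hy : 0 ≤ y) :
    supIcc f (x + y) = supIcc f x + supIcc f y := by
  rw [supIcc, ← Icc_zero_add_Icc_zero hx hy, image_add,
    csSup_add ((nonempty_Icc.2 hx).image f) (hf.bddAbove_image_Icc 0 x)
      ((nonempty_Icc.2 hy).image f) (hf.bddAbove_image_Icc 0 y)]
  rfl

lemma supIcc_neg (hf : OrderBoundedFunc f) {x : X} (hx : 0 ≤ x) :
    supIcc (-f) x = supIcc f x - f x := by
  have hreflect : ∀ {w}, w ∈ Icc 0 x → x - w ∈ Icc 0 x := fun hw =>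
    ⟨sub_nonneg.2 hw.2, sub_le_self x hw.1⟩
  refine le_antisymm (supIcc_le hx fun w hw => ?_) ?_
  · have := le_supIcc hf (hreflect hw)
    rw [map_sub] at this
    simp only [LinearMap.neg_apply]
    linarith
  · refine sub_le_iff_le_add.2 (supIcc_le hx fun w hw => ?_)
    have := le_supIcc hf.neg (hreflect hw)
    simp only [LinearMap.neg_apply, map_sub] at this
    linarith

variable [PosSMulMono ℝ X]

variable (f) in
noncomputable def positivePart (hf : OrderBoundedFunc f) : X →ₗ[ℝ] ℝ :=
  linearExtensionOfNonneg (supIcc f) (fun _ _ hx hy => supIcc_add hf hx hy)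
    (fun _ hc x _ => supIcc_smul hc x)

lemma positivePart_apply_of_nonneg (hf : OrderBoundedFunc f) {x : X} (hx : 0 ≤ x) :
    positivePart f hf x = supIcc f x :=
  linearExtensionOfNonneg_apply_of_nonneg hx

lemma positivePart_nonneg (hf : OrderBoundedFunc f) {x : X} (hx : 0 ≤ x) :
    0 ≤ positivePart f hf x := by
  rw [positivePart_apply_of_nonneg hf hx]
  simpa using le_supIcc hf ⟨le_rfl, hx⟩

lemma exists_pos_of_positivePart_pos (hf : OrderBoundedFunc f) {x : X} (hx : 0 ≤ x)
    (h : 0 < positivePart f hf x) : ∃ z ∈ Icc 0 x, 0 < f z := by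
  by_contra! hz
  exact h.not_ge ((positivePart_apply_of_nonneg hf hx).trans_le (supIcc_le hx hz))

lemma positivePart_sub_positivePart_neg (hf : OrderBoundedFunc f) :
    positivePart f hf - positivePart (-f) hf.neg = f := by
  have hnonneg : ∀ y, 0 ≤ y → positivePart f hf y - positivePart (-f) hf.neg y = f y :=
    fun y hy => by
      rw [positivePart_apply_of_nonneg hf hy, positivePart_apply_of_nonneg hf.neg hy,
        supIcc_neg hf hy]
      ring
  ext x
  rw [LinearMap.sub_apply, ← posPart_sub_negPart x, map_sub, map_sub, map_sub]
  linarith [hnonneg _ (posPart_nonneg x), hnonneg _ (negPart_nonneg x)]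

lemma IsVectorSublattice.apply_nonpos_of_inf_eq_zero (hker : IsVectorSublattice (LinearMap.ker f))
    {a b : X} (ha : 0 ≤ a) (hb : 0 ≤ b) (hab : a ⊓ b = 0) (hfa : 0 < f a) : f b ≤ 0 := by
  by_contra! hfb
  have hmem : f b • a - f a • b ∈ LinearMap.ker f := by simp [mul_comm]
  have hsup := hker _ hmem 0 (zero_mem _)
  rw [← posPart_def, posPart_sub_of_inf_eq_zero (smul_inf_smul_eq_zero ha hb hab hfb hfa),
    LinearMap.mem_ker, map_smul, smul_eq_mul] at hsup
  exact (mul_pos hfb hfa).ne' hsup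

lemma positivePart_map_sup (hf : OrderBoundedFunc f) (hker : IsVectorSublattice (LinearMap.ker f))
    (x y : X) : positivePart f hf (x ⊔ y) = max (positivePart f hf x) (positivePart f hf y) := by
  refine map_sup_eq_max_of_disjoint (fun _ => positivePart_nonneg hf)
    (fun a b ha hb hab => ?_) x y
  by_contra! h
  obtain ⟨z, hz, hfz⟩ :=
    exists_pos_of_positivePart_pos hf ha ((positivePart_nonneg hf ha).lt_of_ne' h.1)
  obtain ⟨w, hw, hfw⟩ :=
    exists_pos_of_positivePart_pos hf hb ((positivePart_nonneg hf hb).lt_of_ne' h.2)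
  have hzw : z ⊓ w = 0 := le_antisymm ((inf_le_inf hz.2 hw.2).trans hab.le) (le_inf hz.1 hw.1)
  exact (hker.apply_nonpos_of_inf_eq_zero hz.1 hw.1 hzw hfz).not_gt hfw

end RieszKantorovich

section OrderBounded

variable {X : Type*} [AddCommGroup X] [Lattice X] [IsOrderedAddMonoid X] [Module ℝ X]
  [PosSMulMono ℝ X] {f : X →ₗ[ℝ] ℝ}

/-- If `|f|` were unbounded on `[0, e]`, then `u - w / f w` with `|f w| → ∞` would be a sequence in
`ker f` converging `e`-uniformly to `u ∉ ker f`. -/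
lemma exists_abs_le_on_Icc_of_ruClosed_ker (hcl : RUClosed (LinearMap.ker f : Set X)) {u : X}
    (hu : f u = 1) {e : X} (he : 0 ≤ e) : ∃ M, ∀ w ∈ Icc 0 e, |f w| ≤ M := by
  by_contra! hunb
  choose w hw hlt using fun n : ℕ => hunb n
  have hfw : ∀ n, 0 < |f (w n)| := fun n => (Nat.cast_nonneg n).trans_lt (hlt n)
  refine one_ne_zero (hu.symm.trans (LinearMap.mem_ker.1 (hcl u
    (fun n => u - (f (w n))⁻¹ • w n) e he (fun n => ?_) fun ε hε => ?_)))
  · simp [hu, inv_mul_cancel₀ (abs_pos.1 (hfw n))]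
  · obtain ⟨N, hN⟩ := exists_nat_gt ε⁻¹
    refine ⟨N, fun n hn => ?_⟩
    have hinv : |f (w n)|⁻¹ ≤ ε :=
      inv_le_of_inv_le₀ hε (hN.le.trans ((Nat.cast_le.2 hn).trans (hlt n).le))
    calc |u - (f (w n))⁻¹ • w n - u| = |f (w n)|⁻¹ • w n := by
          rw [sub_sub_cancel_left, abs_neg, abs_smul_of_nonneg (hw n).1, abs_inv]
      _ ≤ |f (w n)|⁻¹ • e := smul_le_smul_of_nonneg_left (hw n).2 (by positivity)
      _ ≤ ε • e := smul_le_smul_of_nonneg_right hinv he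

lemma orderBoundedFunc_of_ruClosed_ker (hcl : RUClosed (LinearMap.ker f : Set X)) {u : X}
    (hu : f u = 1) : OrderBoundedFunc f := by
  intro a b
  obtain ⟨M, hM⟩ := exists_abs_le_on_Icc_of_ruClosed_ker hcl hu (posPart_nonneg (b - a))
  refine ⟨|f a| + M, fun x hax hxb => ?_⟩
  calc |f x| = |f a + f (x - a)| := by rw [map_sub, add_sub_cancel]
    _ ≤ |f a| + |f (x - a)| := abs_add_le _ _
    _ ≤ |f a| + M := add_le_add_right
          (hM _ ⟨sub_nonneg.2 hax, (sub_le_sub_right hxb a).trans (le_posPart _)⟩) _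

lemma exists_map_sup_sub_eq (hf : OrderBoundedFunc f)
    (hker : IsVectorSublattice (LinearMap.ker f)) :
    ∃ φ ψ : X →ₗ[ℝ] ℝ, (∀ x y, φ (x ⊔ y) = max (φ x) (φ y)) ∧
      (∀ x y, ψ (x ⊔ y) = max (ψ x) (ψ y)) ∧ φ - ψ = f :=
  ⟨positivePart f hf, positivePart (-f) hf.neg, positivePart_map_sup hf hker,
    positivePart_map_sup hf.neg (by rwa [LinearMap.ker_neg]),
    positivePart_sub_positivePart_neg hf⟩

end OrderBounded

lemma Submodule.exists_surjective_ker_eq_of_finrank_quotient_eq_one {K M : Type*} [Field K]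
    [AddCommGroup M] [Module K M] {Y : Submodule K M} (h : Module.finrank K (M ⧸ Y) = 1) :
    ∃ f : M →ₗ[K] K, Function.Surjective f ∧ LinearMap.ker f = Y := by
  have : Module.Finite K (M ⧸ Y) := Module.finite_of_finrank_eq_succ h
  let e := LinearEquiv.ofFinrankEq (M ⧸ Y) K (by rw [h, Module.finrank_self])
  exact ⟨e.toLinearMap ∘ₗ Y.mkQ, e.surjective.comp Y.mkQ_surjective,
    by rw [LinearEquiv.ker_comp, Submodule.ker_mkQ]⟩

theorem stmt17_general {X : Type*} [AddCommGroup X] [Lattice X]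
    [CovariantClass X X (· + ·) (· ≤ ·)] [Module ℝ X] [PosSMulMono ℝ X] (Y : Submodule ℝ X)
    (hcodim : Module.finrank ℝ (X ⧸ Y) = 1) :
    (RUClosed (Y : Set X) ∧ IsVectorSublattice Y) ↔
      ∃ φ ψ : X →ₗ[ℝ] ℝ,
        (∀ x y : X, φ (x ⊔ y) = max (φ x) (φ y)) ∧
        (∀ x y : X, ψ (x ⊔ y) = max (ψ x) (ψ y)) ∧
        Y = LinearMap.ker (φ - ψ) := by
  have : IsOrderedAddMonoid X := { add_le_add_left := fun _ _ h c => add_le_add_left h c }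
  constructor
  · rintro ⟨hcl, hsub⟩
    obtain ⟨f, hf, rfl⟩ := Y.exists_surjective_ker_eq_of_finrank_quotient_eq_one hcodim
    obtain ⟨u, hu⟩ := hf 1
    obtain ⟨φ, ψ, hφ, hψ, hφψ⟩ :=
      exists_map_sup_sub_eq (orderBoundedFunc_of_ruClosed_ker hcl hu) hsub
    exact ⟨φ, ψ, hφ, hψ, by rw [hφψ]⟩
  · rintro ⟨φ, ψ, hφ, hψ, rfl⟩
    exact ⟨ruClosed_ker_sub hφ hψ, isVectorSublattice_ker_sub hφ hψ⟩

theorem stmt17 {X : Type*} [AddCommGroup X] [Lattice X]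
    [CovariantClass X X (· + ·) (· ≤ ·)] [Module ℝ X] [PosSMulMono ℝ X] (hArch : ArchimedeanVL X) (Y : Submodule ℝ X)
    (hcodim : Module.finrank ℝ (X ⧸ Y) = 1) :
    (RUClosed (Y : Set X) ∧ IsVectorSublattice Y) ↔
      ∃ φ ψ : X →ₗ[ℝ] ℝ,
        (∀ x y : X, φ (x ⊔ y) = max (φ x) (φ y)) ∧
        (∀ x y : X, ψ (x ⊔ y) = max (ψ x) (ψ y)) ∧
        Y = LinearMap.ker (φ - ψ) :=
  stmt17_general Y hcodim
end

section
/- Every uniformly closed sublattice of codimension n in an Archimedean vector lattice contains a uniformly closed order ideal of codimension at most 2n. -/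
/-!
The ideal core `J = {x | ∀ y, |y| ≤ |x| → y ∈ Y}` is the largest order ideal inside `Y`; it is a
subspace by the Riesz decomposition property and inherits uniform closedness from `Y`.

Positive elements outside `J` that are pairwise disjoint modulo `J` number at most `2n`: picking
`uᵢ ∉ Y` below them, the linear relations among the classes of the `uᵢ` in `X ⧸ Y` form a
sublattice of `ℝᵏ` with no vector supported on a single point, and such a sublattice has dimension
at most `k / 2`.

Take a maximal such family `E`. Maximality and uniform closedness of `J` make every
`0 ≤ v ≤ w ∈ E` a multiple of `w` modulo `J`. Then every `x ≥ 0` agrees modulo `J` with `∑ t_w • w`, where `t_w` is the largest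
`t` with `(t • w - x)⁺ ∈ J`; otherwise the excess `(x - ∑ t_w • w)⁺` could be added to `E`. So the
at most `2n` classes of `E` span `X ⧸ J`.
-/

section LatticeOrderedGroup

variable {α : Type*} [AddCommGroup α] [Lattice α] [IsOrderedAddMonoid α]

lemma eq_zero_of_abs_nonpos {a : α} (h : |a| ≤ 0) : a = 0 :=
  le_antisymm ((le_abs_self a).trans h) (neg_nonpos.1 ((neg_le_abs a).trans h))

lemma posPart_le_abs (a : α) : a⁺ ≤ |a| := sup_le (le_abs_self a) (abs_nonneg a)

lemma negPart_le_abs (a : α) : a⁻ ≤ |a| := sup_le (neg_le_abs a) (abs_nonneg a)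

lemma posPart_sub_le_posPart {p q e : α} (hpq : p ≤ q + e) (he : 0 ≤ e) : p⁺ - e ≤ q⁺ :=
  sub_le_iff_le_add.2 <| sup_le (hpq.trans (add_le_add_left (le_posPart q) e))
    (add_nonneg (posPart_nonneg q) he)

lemma add_inf_le_inf_add_inf {a b c : α} (ha : 0 ≤ a) (hb : 0 ≤ b) (hc : 0 ≤ c) :
    (a + b) ⊓ c ≤ a ⊓ c + b ⊓ c := by
  rw [add_inf]
  refine le_inf ?_ (inf_le_right.trans (le_add_of_nonneg_left (le_inf ha hc)))
  calc (a + b) ⊓ c ≤ (a + b) ⊓ (c + b) := inf_le_inf_left _ (le_add_of_nonneg_right hb)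
    _ = a ⊓ c + b := (inf_add a c b).symm

lemma posPart_add_sub_le {a b x : α} (ha : 0 ≤ a) (hb : 0 ≤ b) :
    (a + b - x)⁺ ≤ (a - x)⁺ + (b - x)⁺ + a ⊓ b := by
  have h₁ : a + b - x ≤ (a - x)⁺ + b := by
    rw [add_sub_right_comm]; exact add_le_add_left (le_posPart _) b
  have h₂ : a + b - x ≤ a + (b - x)⁺ := by
    rw [add_sub_assoc]; exact add_le_add_right (le_posPart _) a
  calc (a + b - x)⁺ ≤ ((a - x)⁺ + b) ⊓ (a + (b - x)⁺) :=
        sup_le (le_inf h₁ h₂)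
          (le_inf (add_nonneg (posPart_nonneg _) hb) (add_nonneg ha (posPart_nonneg _)))
    _ = (a - x)⁺ + (b - x)⁺ + (b - (b - x)⁺) ⊓ (a - (a - x)⁺) := by
        rw [add_inf]; congr 1 <;> abel
    _ ≤ (a - x)⁺ + (b - x)⁺ + a ⊓ b := by
        rw [← inf_eq_sub_posPart_sub, ← inf_eq_sub_posPart_sub]
        exact add_le_add_right (le_inf (inf_le_right.trans inf_le_left)
          (inf_le_left.trans inf_le_left)) _

lemma abs_sup_neg_inf_sub_le (y c : α) : |(y ⊔ -c) ⊓ c - y| ≤ (|y| - c)⁺ := by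
  refine sup_le ?_ ?_
  · calc (y ⊔ -c) ⊓ c - y ≤ y ⊔ -c - y := sub_le_sub_right inf_le_left y
      _ = (-y - c)⁺ := by rw [sup_sub, sub_self, sup_comm, show -c - y = -y - c by abel]; rfl
      _ ≤ (|y| - c)⁺ := posPart_mono (sub_le_sub_right (neg_le_abs y) c)
  · calc -((y ⊔ -c) ⊓ c - y) ≤ y - y ⊓ c := by
          rw [neg_sub]; exact sub_le_sub_left (inf_le_inf_right c le_sup_left) y
      _ = (y - c)⁺ := by rw [inf_eq_sub_posPart_sub, sub_sub_cancel]
      _ ≤ (|y| - c)⁺ := posPart_mono (sub_le_sub_right (le_abs_self y) c)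

lemma abs_sup_neg_inf_le (y : α) {c : α} (hc : 0 ≤ c) : |(y ⊔ -c) ⊓ c| ≤ c :=
  sup_le inf_le_right (neg_le.1 (le_inf le_sup_right (neg_le_self hc)))

theorem exists_add_eq_of_abs_le_add {x₁ x₂ y : α} (h : |y| ≤ |x₁| + |x₂|) :
    ∃ y₁ y₂, y = y₁ + y₂ ∧ |y₁| ≤ |x₁| ∧ |y₂| ≤ |x₂| := by
  set y₁ := (y ⊔ -|x₁|) ⊓ |x₁|
  refine ⟨y₁, y - y₁, (add_sub_cancel y₁ y).symm, abs_sup_neg_inf_le y (abs_nonneg x₁), ?_⟩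
  calc |y - y₁| ≤ (|y| - |x₁|)⁺ := abs_sub_comm y y₁ ▸ abs_sup_neg_inf_sub_le y |x₁|
    _ ≤ |x₂|⁺ := posPart_mono (sub_le_iff_le_add'.2 h)
    _ = |x₂| := posPart_eq_self.2 (abs_nonneg x₂)

end LatticeOrderedGroup

section VectorLattice

variable {X : Type*} [AddCommGroup X] [Lattice X] [Module ℝ X] [PosSMulMono ℝ X]

lemma smul_sup_of_nonneg {c : ℝ} (hc : 0 ≤ c) (a b : X) : c • (a ⊔ b) = c • a ⊔ c • b := by
  obtain rfl | hc := hc.eq_or_lt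
  · simp
  · exact (OrderIso.smulRight hc).map_sup a b

lemma smul_inf_of_nonneg {c : ℝ} (hc : 0 ≤ c) (a b : X) : c • (a ⊓ b) = c • a ⊓ c • b := by
  obtain rfl | hc := hc.eq_or_lt
  · simp
  · exact (OrderIso.smulRight hc).map_inf a b

lemma abs_smul' (c : ℝ) (a : X) : |c • a| = |c| • |a| := by
  have key : ∀ {c : ℝ} (a : X), 0 ≤ c → |c • a| = c • |a| := fun a hc => by
    rw [abs, abs, smul_sup_of_nonneg hc, smul_neg]
  obtain hc | hc := le_total 0 c
  · rw [abs_of_nonneg hc, key a hc]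
  · rw [abs_of_nonpos hc, ← neg_smul_neg, ← abs_neg a, key (-a) (neg_nonneg.2 hc)]

variable [IsOrderedAddMonoid X]

lemma smul_inf_smul_of_nonneg {a : X} (ha : 0 ≤ a) (s r : ℝ) : s • a ⊓ r • a = (s ⊓ r) • a := by
  obtain h | h := le_total s r
  · rw [inf_eq_left.2 h, inf_eq_left.2 (smul_le_smul_of_nonneg_right h ha)]
  · rw [inf_eq_right.2 h, inf_eq_right.2 (smul_le_smul_of_nonneg_right h ha)]

lemma smul_inf_smul_le {s r : ℝ} {a b : X} (hs : 0 ≤ s) (ha : 0 ≤ a) (hb : 0 ≤ b) :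
    s • a ⊓ r • b ≤ max s r • (a ⊓ b) := by
  rw [smul_inf_of_nonneg (hs.trans (le_max_left s r))]
  exact inf_le_inf (smul_le_smul_of_nonneg_right (le_max_left s r) ha)
    (smul_le_smul_of_nonneg_right (le_max_right s r) hb)

end VectorLattice

section OrderIdeal

variable {X : Type*} [AddCommGroup X] [Lattice X] [IsOrderedAddMonoid X] [Module ℝ X]
  {J : Submodule ℝ X}

namespace IsOrderIdeal

lemma mem_of_nonneg_of_le (hJ : IsOrderIdeal J) {a b : X} (ha : 0 ≤ a) (hab : a ≤ b)
    (hb : b ∈ J) : a ∈ J :=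
  hJ a b (by rw [abs_of_nonneg ha]; exact hab.trans (le_abs_self b)) hb

lemma abs_mem (hJ : IsOrderIdeal J) {a : X} (ha : a ∈ J) : |a| ∈ J :=
  hJ |a| a (abs_abs a).le ha

lemma posPart_mem_of_le (hJ : IsOrderIdeal J) {a b : X} (hab : a ≤ b) (hb : b ∈ J) : a⁺ ∈ J :=
  hJ.mem_of_nonneg_of_le (posPart_nonneg a) ((posPart_mono hab).trans (posPart_le_abs b))
    (hJ.abs_mem hb)

lemma sum_inf_mem (hJ : IsOrderIdeal J) {ι : Type*} {s : Finset ι} {f : ι → X} {c : X}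
    (hf : ∀ i ∈ s, 0 ≤ f i) (hc : 0 ≤ c) (hfc : ∀ i ∈ s, f i ⊓ c ∈ J) :
    (∑ i ∈ s, f i) ⊓ c ∈ J := by
  refine (Finset.sum_induction f (fun a => 0 ≤ a ∧ a ⊓ c ∈ J) ?_ ?_
    fun i hi => ⟨hf i hi, hfc i hi⟩).2
  · rintro a b ⟨ha, haJ⟩ ⟨hb, hbJ⟩
    exact ⟨add_nonneg ha hb, hJ.mem_of_nonneg_of_le (le_inf (add_nonneg ha hb) hc)
      (add_inf_le_inf_add_inf ha hb hc) (J.add_mem haJ hbJ)⟩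
  · exact ⟨le_rfl, by rw [inf_eq_left.2 hc]; exact J.zero_mem⟩

lemma sum_inf_sum_mem (hJ : IsOrderIdeal J) {ι κ : Type*} {s : Finset ι} {t : Finset κ}
    {f : ι → X} {g : κ → X} (hf : ∀ i ∈ s, 0 ≤ f i) (hg : ∀ j ∈ t, 0 ≤ g j)
    (hfg : ∀ i ∈ s, ∀ j ∈ t, f i ⊓ g j ∈ J) : (∑ i ∈ s, f i) ⊓ ∑ j ∈ t, g j ∈ J :=
  hJ.sum_inf_mem hf (Finset.sum_nonneg hg) fun i hi => by
    rw [inf_comm]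
    exact hJ.sum_inf_mem hg (hf i hi) fun j hj => inf_comm (f i) (g j) ▸ hfg i hi j hj

lemma posPart_sum_sub_mem (hJ : IsOrderIdeal J) {ι : Type*} {s : Finset ι} {f : ι → X} {x : X}
    (hf : ∀ i ∈ s, 0 ≤ f i) (hx : 0 ≤ x) (hfx : ∀ i ∈ s, (f i - x)⁺ ∈ J)
    (hdisj : (s : Set ι).Pairwise fun i j => f i ⊓ f j ∈ J) : (∑ i ∈ s, f i - x)⁺ ∈ J := by
  classical
  induction s using Finset.induction_on with
  | empty =>
    rw [Finset.sum_empty, zero_sub, posPart_eq_zero.2 (neg_nonpos.2 hx)]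
    exact J.zero_mem
  | insert a s ha ih =>
    simp only [Finset.mem_insert, forall_eq_or_imp] at hf hfx
    rw [Finset.coe_insert, Set.pairwise_insert] at hdisj
    have hcross : f a ⊓ ∑ i ∈ s, f i ∈ J := by
      simpa using hJ.sum_inf_sum_mem (s := {a}) (by simpa using hf.1) hf.2
        fun _ hb i hi => (Finset.mem_singleton.1 hb) ▸ (hdisj.2 i hi fun h => ha (h ▸ hi)).1
    rw [Finset.sum_insert ha]
    exact hJ.mem_of_nonneg_of_le (posPart_nonneg _)
      (posPart_add_sub_le hf.1 (Finset.sum_nonneg hf.2))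
      (J.add_mem (J.add_mem hfx.1 (ih hf.2 hfx.2 hdisj.1)) hcross)

variable [PosSMulMono ℝ X]

lemma smul_inf_smul_mem (hJ : IsOrderIdeal J) {s r : ℝ} {a b : X} (hs : 0 ≤ s) (hr : 0 ≤ r)
    (ha : 0 ≤ a) (hb : 0 ≤ b) (hab : a ⊓ b ∈ J) : s • a ⊓ r • b ∈ J :=
  hJ.mem_of_nonneg_of_le (le_inf (smul_nonneg hs ha) (smul_nonneg hr hb))
    (smul_inf_smul_le hs ha hb) (J.smul_mem _ hab)

end IsOrderIdeal

end OrderIdeal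

section UniformlyClosed

variable {X : Type*} [AddCommGroup X] [Lattice X] [IsOrderedAddMonoid X] [Module ℝ X]
  [PosSMulMono ℝ X]

lemma RUClosed.mem_of_forall_posPart_sub_smul_mem {A : Set X} (hA : RUClosed A) {a e : X}
    (ha : 0 ≤ a) (he : 0 ≤ e) (h : ∀ ε : ℝ, 0 < ε → (a - ε • e)⁺ ∈ A) : a ∈ A := by
  refine hA a (fun m => (a - (1 / (m + 1 : ℝ)) • e)⁺) e he (fun m => h _ (by positivity))
    fun ε hε => ?_
  obtain ⟨N, hN⟩ := exists_nat_one_div_lt hε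
  refine ⟨N, fun m hm => ?_⟩
  have hδ : 1 / (m + 1 : ℝ) ≤ ε :=
    (one_div_le_one_div_of_le (by positivity) (by exact_mod_cast Nat.add_le_add_right hm 1)).trans
      hN.le
  rw [abs_sub_comm, ← inf_eq_sub_posPart_sub,
    abs_of_nonneg (le_inf ha (smul_nonneg (by positivity) he))]
  exact inf_le_right.trans (smul_le_smul_of_nonneg_right hδ he)

variable {J : Submodule ℝ X}

lemma IsOrderIdeal.exists_isGreatest_posPart_smul_sub_mem (hJ : IsOrderIdeal J)
    (hJc : RUClosed (J : Set X)) {x w : X} (hx : 0 ≤ x) (hw : 0 ≤ w) (hwJ : w ∉ J) :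
    ∃ t, IsGreatest {t : ℝ | 0 ≤ t ∧ (t • w - x)⁺ ∈ J} t := by
  set D := {t : ℝ | 0 ≤ t ∧ (t • w - x)⁺ ∈ J}
  have hD0 : (0 : ℝ) ∈ D := ⟨le_rfl, by
    rw [zero_smul, zero_sub, posPart_eq_zero.2 (neg_nonpos.2 hx)]; exact J.zero_mem⟩
  have hbdd : BddAbove D := by
    by_contra hD
    refine hwJ (hJc.mem_of_forall_posPart_sub_smul_mem hw hx fun ε hε => ?_)
    obtain ⟨t, ⟨-, htJ⟩, hεt⟩ := not_bddAbove_iff.1 hD ε⁻¹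
    have ht : 0 < t := (inv_pos.2 hε).trans hεt
    refine hJ.posPart_mem_of_le ?_ (J.smul_mem t⁻¹ htJ)
    calc w - ε • x ≤ w - t⁻¹ • x :=
          sub_le_sub_left (smul_le_smul_of_nonneg_right (inv_lt_of_inv_lt₀ hε hεt).le hx) w
      _ = t⁻¹ • (t • w - x) := by rw [smul_sub, inv_smul_smul₀ ht.ne']
      _ ≤ t⁻¹ • (t • w - x)⁺ := smul_le_smul_of_nonneg_left (le_posPart _) (inv_nonneg.2 ht.le)
  refine ⟨sSup D, ⟨le_csSup hbdd hD0, ?_⟩, fun t ht => le_csSup hbdd ht⟩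
  refine hJc.mem_of_forall_posPart_sub_smul_mem (posPart_nonneg _) hw fun ε hε => ?_
  obtain ⟨s, ⟨-, hsJ⟩, hs⟩ := exists_lt_of_lt_csSup ⟨0, hD0⟩ (sub_lt_self (sSup D) hε)
  refine hJ.posPart_mem_of_le (posPart_sub_le_posPart ?_ (smul_nonneg hε.le hw)) hsJ
  calc sSup D • w - x = (s • w - x) + (sSup D - s) • w := by rw [sub_smul]; abel
    _ ≤ s • w - x + ε • w :=
        add_le_add le_rfl (smul_le_smul_of_nonneg_right (show sSup D - s ≤ ε by linarith) hw)

lemma IsOrderIdeal.exists_sub_smul_mem (hJ : IsOrderIdeal J) (hJc : RUClosed (J : Set X))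
    {u v : X} (hu : 0 ≤ u) (hv : 0 ≤ v) (huJ : u ∉ J)
    (hcomp : ∀ r : ℝ, (v - r • u)⁺ ∈ J ∨ (v - r • u)⁻ ∈ J) : ∃ s : ℝ, 0 ≤ s ∧ v - s • u ∈ J := by
  -- with `t` largest such that `(t • u - v)⁺ ∈ J`, comparability gives `(v - (t + ε) • u)⁺ ∈ J`
  obtain ⟨t, ⟨ht0, htJ⟩, htmax⟩ := hJ.exists_isGreatest_posPart_smul_sub_mem hJc hv hu huJ
  have hneg : (v - t • u)⁻ ∈ J := by rwa [← posPart_neg, neg_sub]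
  have hpos : (v - t • u)⁺ ∈ J := by
    refine hJc.mem_of_forall_posPart_sub_smul_mem (posPart_nonneg _) hu fun ε hε => ?_
    have hε' : (v - (t + ε) • u)⁺ ∈ J := (hcomp (t + ε)).resolve_right fun h => by
      have := @htmax (t + ε) ⟨by linarith, by rwa [← posPart_neg, neg_sub] at h⟩
      linarith
    exact hJ.posPart_mem_of_le
      (posPart_sub_le_posPart (le_of_eq (by rw [add_smul]; abel)) (smul_nonneg hε.le hu)) hε'
  exact ⟨t, ht0, posPart_sub_negPart (v - t • u) ▸ J.sub_mem hpos hneg⟩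

end UniformlyClosed

namespace Submodule

variable {X : Type*} [AddCommGroup X] [Lattice X] [IsOrderedAddMonoid X] [Module ℝ X]
  [PosSMulMono ℝ X] (Y : Submodule ℝ X)

def idealCore : Submodule ℝ X where
  carrier := {x | ∀ y : X, |y| ≤ |x| → y ∈ Y}
  zero_mem' y hy := by
    rw [eq_zero_of_abs_nonpos (hy.trans_eq abs_zero)]
    exact Y.zero_mem
  add_mem' {a b} ha hb y hy := by
    obtain ⟨y₁, y₂, rfl, h₁, h₂⟩ := exists_add_eq_of_abs_le_add (hy.trans (abs_add_le a b))
    exact Y.add_mem (ha y₁ h₁) (hb y₂ h₂)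
  smul_mem' c {x} hx y hy := by
    obtain rfl | hc := eq_or_ne c 0
    · rw [zero_smul, abs_zero] at hy
      rw [eq_zero_of_abs_nonpos hy]
      exact Y.zero_mem
    rw [← smul_inv_smul₀ hc y]
    refine Y.smul_mem c (hx _ ?_)
    rw [abs_smul'] at hy
    calc |c⁻¹ • y| = |c|⁻¹ • |y| := by rw [abs_smul', abs_inv]
      _ ≤ |c|⁻¹ • (|c| • |x|) := smul_le_smul_of_nonneg_left hy (by positivity)
      _ = |x| := inv_smul_smul₀ (abs_ne_zero.2 hc) _

lemma idealCore_le : Y.idealCore ≤ Y := fun x hx => hx x le_rfl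

lemma isOrderIdeal_idealCore : IsOrderIdeal Y.idealCore :=
  fun _ _ hxy hy z hz => hy z (hz.trans hxy)

lemma ruClosed_idealCore (hY : RUClosed (Y : Set X)) : RUClosed (Y.idealCore : Set X) := by
  intro x a e he ha hconv y hy
  refine hY y (fun m => (y ⊔ -|a m|) ⊓ |a m|) e he
    (fun m => ha m _ (abs_sup_neg_inf_le y (abs_nonneg _))) fun ε hε => ?_
  obtain ⟨N, hN⟩ := hconv ε hε
  refine ⟨N, fun m hm => ?_⟩
  calc _ ≤ (|y| - |a m|)⁺ := abs_sup_neg_inf_sub_le y _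
    _ ≤ (|x| - |a m|)⁺ := posPart_mono (sub_le_sub_right hy _)
    _ ≤ |a m - x| := sup_le ((le_abs_self _).trans
          ((abs_abs_sub_abs_le x (a m)).trans (abs_sub_comm _ _).le)) (abs_nonneg _)
    _ ≤ ε • e := hN m hm

end Submodule

lemma Submodule.exists_nonneg_ne_zero_mem_of_posPart_mem {M : Type*} [AddCommGroup M] [Lattice M]
    [IsOrderedAddMonoid M] [Module ℝ M] {R : Submodule ℝ M} (hR : ∀ c ∈ R, c⁺ ∈ R)
    (hR₀ : R ≠ ⊥) : ∃ c, c ∈ R ∧ 0 ≤ c ∧ c ≠ 0 := by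
  obtain ⟨c, hcR, hc⟩ := R.ne_bot_iff.1 hR₀
  by_cases h : c⁺ = 0
  · refine ⟨c⁻, posPart_neg c ▸ hR _ (R.neg_mem hcR), negPart_nonneg c, fun h' => hc ?_⟩
    rw [← posPart_sub_negPart c, h, h', sub_zero]
  · exact ⟨c⁺, hR c hcR, posPart_nonneg c, h⟩

lemma Submodule.finrank_le_finrank_inf_ker_add_one {K V : Type*} [Field K] [AddCommGroup V]
    [Module K V] [FiniteDimensional K V] (R : Submodule K V) (f : V →ₗ[K] K) :
    Module.finrank K R ≤ Module.finrank K ↥(R ⊓ LinearMap.ker f) + 1 := by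
  by_cases h : ∃ c ∈ R, f c ≠ 0
  · obtain ⟨c, hcR, hc⟩ := h
    have hle : R ≤ R ⊓ LinearMap.ker f ⊔ K ∙ c := fun d hd => Submodule.mem_sup.2
      ⟨d - (f d / f c) • c, ⟨R.sub_mem hd (R.smul_mem _ hcR), by simp [div_mul_cancel₀ _ hc]⟩,
        (f d / f c) • c, Submodule.smul_mem _ _ (Submodule.mem_span_singleton_self c),
        sub_add_cancel d _⟩
    refine (Submodule.finrank_mono hle).trans <|
      (Submodule.finrank_add_le_finrank_add_finrank _ _).trans (add_le_add le_rfl ?_)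
    exact (finrank_span_singleton fun h => hc (by rw [h, map_zero])).le
  · simp only [not_exists, not_and, not_not] at h
    rw [inf_eq_left.2 fun d hd => h d hd]
    exact Nat.le_succ _

section SublatticeOfPi

open Finset Module

variable {ι : Type*} [Fintype ι] {R : Submodule ℝ (ι → ℝ)}

lemma exists_eq_mul_of_minimal_support (hR : ∀ c ∈ R, c⁺ ∈ R) {c : ι → ℝ} (hcR : c ∈ R)
    (hc : 0 ≤ c) (hmin : ∀ d ∈ R, 0 ≤ d → d ≠ 0 → ¬ #{i | d i ≠ 0} < #{i | c i ≠ 0})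
    {d : ι → ℝ} (hdR : d ∈ R) : ∃ t : ℝ, ∀ i, c i ≠ 0 → d i = t * c i := by
  have hcpos : ∀ i, c i ≠ 0 → 0 < c i := fun i hi => (hc i).lt_of_ne' hi
  have key : ∀ d ∈ R, 0 ≤ d → ∃ t : ℝ, ∀ i, c i ≠ 0 → d i = t * c i := by
    intro d hdR hd
    by_cases hS : ({i | c i ≠ 0} : Finset ι).Nonempty
    swap
    · exact ⟨0, fun i hi => absurd ⟨i, by simpa using hi⟩ hS⟩
    obtain ⟨i₀, hi₀, hmin₀⟩ := exists_min_image _ (fun i => d i / c i) hS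
    simp only [mem_filter, mem_univ, true_and] at hi₀ hmin₀
    set t := d i₀ / c i₀
    set e := d - t • c with he_def
    have heR : e ∈ R := R.sub_mem hdR (R.smul_mem t hcR)
    have he : 0 ≤ e := fun i => by
      by_cases hi : c i = 0
      · simpa [he_def, hi] using hd i
      · have := (le_div_iff₀ (hcpos i hi)).1 (hmin₀ i hi)
        simp only [he_def, Pi.sub_apply, Pi.smul_apply, smul_eq_mul, Pi.zero_apply]
        linarith
    -- `e ⊓ c` is a nonnegative element of `R` vanishing at `i₀`, so minimality forces it to be `0`
    have hg : e ⊓ c = 0 := by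
      by_contra hg
      refine hmin _ (inf_eq_sub_posPart_sub e c ▸ R.sub_mem heR (hR _ (R.sub_mem heR hcR)))
        (le_inf he hc) hg (card_lt_card ?_)
      refine (ssubset_iff_of_subset fun i hi => ?_).2 ⟨i₀, by simpa using hi₀, ?_⟩
      · simp only [mem_filter, mem_univ, true_and, Pi.inf_apply] at hi ⊢
        exact fun hci => hi (by rw [hci]; exact inf_eq_right.2 (he i))
      · simp [he_def, t, div_mul_cancel₀ _ hi₀]
        exact hc i₀
    refine ⟨t, fun i hi => ?_⟩
    have hgi : e i ⊓ c i = 0 := congrFun hg i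
    have hei : e i = 0 := by
      rcases le_total (e i) (c i) with h | h
      · rwa [inf_eq_left.2 h] at hgi
      · rw [inf_eq_right.2 h] at hgi; exact absurd hgi hi
    simpa [he_def, sub_eq_zero] using hei
  obtain ⟨t₁, ht₁⟩ := key _ (hR d hdR) (posPart_nonneg d)
  obtain ⟨t₂, ht₂⟩ := key _ (posPart_neg d ▸ hR _ (R.neg_mem hdR)) (negPart_nonneg d)
  refine ⟨t₁ - t₂, fun i hi => ?_⟩
  rw [← posPart_sub_negPart d, Pi.sub_apply, ht₁ i hi, ht₂ i hi, sub_mul]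

lemma exists_nonneg_mem_forall_eq_mul (hR : ∀ c ∈ R, c⁺ ∈ R) (hR₀ : R ≠ ⊥) :
    ∃ c ∈ R, 0 ≤ c ∧ c ≠ 0 ∧ ∀ d ∈ R, ∃ t : ℝ, ∀ i, c i ≠ 0 → d i = t * c i := by
  obtain ⟨c, ⟨hcR, hc, hc0⟩, hmin⟩ :=
    (InvImage.wf (fun c : ι → ℝ => #{i | c i ≠ 0}) wellFounded_lt).has_min _
      (R.exists_nonneg_ne_zero_mem_of_posPart_mem hR hR₀)
  exact ⟨c, hcR, hc, hc0, fun d hdR =>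
    exists_eq_mul_of_minimal_support hR hcR hc (fun d hdR hd hd0 => hmin d ⟨hdR, hd, hd0⟩) hdR⟩

theorem two_mul_finrank_le_card_of_posPart_mem (hR : ∀ c ∈ R, c⁺ ∈ R)
    (hsingle : ∀ c ∈ R, ∀ i, (∀ j ≠ i, c j = 0) → c = 0) (s : Finset ι)
    (hs : ∀ c ∈ R, ∀ i ∉ s, c i = 0) : 2 * finrank ℝ R ≤ #s := by
  classical
  induction s using Finset.strongInduction generalizing R with
  | H s ih =>
  obtain rfl | hR₀ := eq_or_ne R ⊥
  · simp
  obtain ⟨c, hcR, hc, hc0, hprop⟩ := exists_nonneg_mem_forall_eq_mul hR hR₀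
  set S : Finset ι := {i | c i ≠ 0}
  obtain ⟨i₀, hi₀⟩ := Function.ne_iff.1 hc0
  obtain ⟨i₁, hi₁, hi₁₀⟩ : ∃ i₁, c i₁ ≠ 0 ∧ i₁ ≠ i₀ := by
    by_contra! h
    exact hc0 (hsingle c hcR i₀ fun j hj => by_contra fun hcj => hj (h j hcj))
  -- the elements of `R` vanishing at `i₀` vanish on all of `S`; induct on `s \ S`
  set R₀ := R ⊓ LinearMap.ker (LinearMap.proj i₀ : (ι → ℝ) →ₗ[ℝ] ℝ)
  have hR₀S : ∀ d ∈ R₀, ∀ i ∈ S, d i = 0 := by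
    intro d ⟨hdR, hdi₀⟩ i hi
    obtain ⟨t, ht⟩ := hprop d hdR
    have ht0 : t = 0 := (mul_eq_zero.1 ((ht i₀ hi₀).symm.trans hdi₀)).resolve_right hi₀
    simpa [ht0] using ht i (by simpa [S] using hi)
  have hSs : S ⊆ s := fun i hi => by_contra fun his => (mem_filter.1 hi).2 (hs c hcR i his)
  have hIH : 2 * finrank ℝ R₀ ≤ #(s \ S) := by
    refine ih _ (sdiff_ssubset hSs ⟨i₀, by simpa [S] using hi₀⟩) (fun d hd => ⟨hR d hd.1, ?_⟩)
      (fun d hd => hsingle d hd.1) fun d hd i hi => ?_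
    · simp [show d i₀ = 0 from hd.2]
    · by_cases his : i ∈ s
      · exact hR₀S d hd i (by simpa [his] using hi)
      · exact hs d hd.1 i his
  have hS2 : 1 < #S :=
    one_lt_card.2 ⟨i₀, by simpa [S] using hi₀, i₁, by simpa [S] using hi₁, hi₁₀.symm⟩
  have hrank : finrank ℝ R ≤ finrank ℝ R₀ + 1 :=
    R.finrank_le_finrank_inf_ker_add_one (LinearMap.proj i₀)
  have := card_sdiff_of_subset hSs
  have := card_le_card hSs
  omega

end SublatticeOfPi

lemma Finset.exists_card_maximal {α : Type*} {P : Finset α → Prop} (h₀ : P ∅) {m : ℕ}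
    (hm : ∀ F, P F → F.card ≤ m) : ∃ E, P E ∧ ∀ F, P F → F.card ≤ E.card := by
  obtain ⟨E, hE, hmax⟩ :=
    (InvImage.wf (fun F : Finset α => m - F.card) wellFounded_lt).has_min {F | P F} ⟨∅, h₀⟩
  refine ⟨E, hE, fun F hF => ?_⟩
  have h₁ := hmax F hF
  have h₂ := hm F hF
  simp only [InvImage] at h₁
  omega

lemma Submodule.finrank_quotient_le_card {K V : Type*} [Field K] [AddCommGroup V] [Module K V]
    {J : Submodule K V} {E : Finset V} (h : span K (E : Set V) ⊔ J = ⊤) :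
    FiniteDimensional K (V ⧸ J) ∧ Module.finrank K (V ⧸ J) ≤ E.card := by
  have hsurj : Function.Surjective (J.mkQ ∘ₗ (span K (E : Set V)).subtype) := by
    rw [← LinearMap.range_eq_top, LinearMap.range_comp, Submodule.range_subtype,
      Submodule.map_mkQ_eq_top, sup_comm, h]
  exact ⟨Module.Finite.of_surjective _ hsurj,
    (LinearMap.finrank_le_finrank_of_surjective hsurj).trans (finrank_span_finset_le_card E)⟩

section DisjointFamilies

open Finset Module

variable {X : Type*} [AddCommGroup X] [Lattice X] [Module ℝ X]

def DisjointModulo (J : Submodule ℝ X) (E : Finset X) : Prop :=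
  (∀ w ∈ E, 0 ≤ w ∧ w ∉ J) ∧ (E : Set X).Pairwise fun w w' => w ⊓ w' ∈ J

variable {J : Submodule ℝ X} {E : Finset X}

lemma DisjointModulo.subset {F : Finset X} (hE : DisjointModulo J E) (hF : F ⊆ E) :
    DisjointModulo J F :=
  ⟨fun w hw => hE.1 w (hF hw), hE.2.mono (coe_subset.2 hF)⟩

lemma DisjointModulo.insert [DecidableEq X] (hE : DisjointModulo J E) {z : X} (hz : 0 ≤ z)
    (hzJ : z ∉ J) (hzE : ∀ w ∈ E, z ⊓ w ∈ J) :
    DisjointModulo J (insert z E) ∧ #(insert z E) = #E + 1 := by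
  have hzE' : z ∉ E := fun h => hzJ (inf_idem z ▸ hzE z h)
  refine ⟨⟨?_, ?_⟩, card_insert_of_notMem hzE'⟩
  · simpa only [mem_insert, forall_eq_or_imp] using ⟨⟨hz, hzJ⟩, hE.1⟩
  · rw [coe_insert, Set.pairwise_insert]
    exact ⟨hE.2, fun w hw _ => ⟨hzE w hw, inf_comm z w ▸ hzE w hw⟩⟩

variable [IsOrderedAddMonoid X]

lemma IsVectorSublattice.mem_of_sub_mem_of_inf_mem {Y : Submodule ℝ X} (hY : IsVectorSublattice Y)
    {a b : X} (hab : a - b ∈ Y) (hab' : a ⊓ b ∈ Y) : a ∈ Y := by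
  have : a = (a - b)⁺ + a ⊓ b := by rw [inf_eq_sub_posPart_sub]; abel
  rw [this]
  exact Y.add_mem (hY _ hab 0 Y.zero_mem) hab'

variable [PosSMulMono ℝ X]

lemma Submodule.exists_nonneg_le_notMem_of_notMem_idealCore {Y : Submodule ℝ X} {w : X}
    (hw : 0 ≤ w) (hwY : w ∉ Y.idealCore) : ∃ u, 0 ≤ u ∧ u ≤ w ∧ u ∉ Y := by
  obtain ⟨y, hyw, hyY⟩ : ∃ y, |y| ≤ |w| ∧ y ∉ Y := by simpa [Submodule.idealCore] using hwY
  rw [abs_of_nonneg hw] at hyw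
  by_cases hy : y⁺ ∈ Y
  · refine ⟨y⁻, negPart_nonneg y, (negPart_le_abs y).trans hyw, fun hy' => hyY ?_⟩
    rw [← posPart_sub_negPart y]
    exact Y.sub_mem hy hy'
  · exact ⟨y⁺, posPart_nonneg y, (posPart_le_abs y).trans hyw, hy⟩

lemma IsVectorSublattice.sum_posPart_smul_mem {Y J : Submodule ℝ X} (hY : IsVectorSublattice Y)
    (hJ : IsOrderIdeal J) (hJY : J ≤ Y) {ι : Type*} [Fintype ι] {u : ι → X} (hu : ∀ i, 0 ≤ u i)
    (hdisj : Pairwise fun i j => u i ⊓ u j ∈ J) {c : ι → ℝ} (hc : ∑ i, c i • u i ∈ Y) :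
    ∑ i, (c i)⁺ • u i ∈ Y := by
  refine hY.mem_of_sub_mem_of_inf_mem (b := ∑ i, (c i)⁻ • u i) ?_ (hJY ?_)
  · rwa [← Finset.sum_sub_distrib, Finset.sum_congr rfl fun i _ => (sub_smul _ _ _).symm,
      Finset.sum_congr rfl fun i _ => congrArg (· • u i) (posPart_sub_negPart (c i))]
  refine hJ.sum_inf_sum_mem (fun i _ => smul_nonneg (posPart_nonneg _) (hu i))
    (fun i _ => smul_nonneg (negPart_nonneg _) (hu i)) fun i _ j _ => ?_
  obtain rfl | hij := eq_or_ne i j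
  · rw [smul_inf_smul_of_nonneg (hu i), posPart_inf_negPart_eq_zero, zero_smul]
    exact J.zero_mem
  · exact hJ.smul_inf_smul_mem (posPart_nonneg _) (negPart_nonneg _) (hu i) (hu j) (hdisj hij)

theorem IsVectorSublattice.card_le_two_mul_finrank {Y J : Submodule ℝ X} (hY : IsVectorSublattice Y)
    (hJ : IsOrderIdeal J) (hJY : J ≤ Y) [FiniteDimensional ℝ (X ⧸ Y)] {ι : Type*} [Fintype ι]
    {u : ι → X} (hu : ∀ i, 0 ≤ u i) (huY : ∀ i, u i ∉ Y)
    (hdisj : Pairwise fun i j => u i ⊓ u j ∈ J) : Fintype.card ι ≤ 2 * finrank ℝ (X ⧸ Y) := by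
  classical
  set ψ := Y.mkQ ∘ₗ Fintype.linearCombination ℝ u
  have hker : ∀ c, c ∈ LinearMap.ker ψ ↔ ∑ i, c i • u i ∈ Y := fun c => by
    simp only [ψ, LinearMap.mem_ker, LinearMap.comp_apply, Fintype.linearCombination_apply,
      Submodule.mkQ_apply, Submodule.Quotient.mk_eq_zero]
  have hpos : ∀ c ∈ LinearMap.ker ψ, c⁺ ∈ LinearMap.ker ψ := fun c hc => by
    simpa only [hker, Pi.posPart_apply] using
      hY.sum_posPart_smul_mem hJ hJY hu hdisj ((hker c).1 hc)
  have hsingle : ∀ c ∈ LinearMap.ker ψ, ∀ i, (∀ j ≠ i, c j = 0) → c = 0 := by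
    intro c hc i hi
    rw [hker, Fintype.sum_eq_single i fun j hj => by rw [hi j hj, zero_smul]] at hc
    have hci : c i = 0 := by_contra fun h => huY i ((Y.smul_mem_iff h).1 hc)
    funext j
    obtain rfl | hj := eq_or_ne j i
    · exact hci
    · exact hi j hj
  have h₁ := two_mul_finrank_le_card_of_posPart_mem hpos hsingle univ (by simp)
  have h₂ := LinearMap.finrank_range_add_finrank_ker ψ
  have h₃ := Submodule.finrank_le (LinearMap.range ψ)
  rw [card_univ, finrank_fintype_fun_eq_card] at *
  omega

lemma DisjointModulo.card_le {Y : Submodule ℝ X} (hE : DisjointModulo Y.idealCore E)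
    (hY : IsVectorSublattice Y) [FiniteDimensional ℝ (X ⧸ Y)] :
    #E ≤ 2 * finrank ℝ (X ⧸ Y) := by
  choose! u hu using fun w (hw : w ∈ E) =>
    Submodule.exists_nonneg_le_notMem_of_notMem_idealCore (hE.1 w hw).1 (hE.1 w hw).2
  rw [← Fintype.card_coe E]
  refine hY.card_le_two_mul_finrank Y.isOrderIdeal_idealCore Y.idealCore_le
    (u := fun w : E => u w) (fun w => (hu w w.2).1) (fun w => (hu w w.2).2.2) fun w w' hne => ?_
  exact Y.isOrderIdeal_idealCore.mem_of_nonneg_of_le (le_inf (hu w w.2).1 (hu w' w'.2).1)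
    (inf_le_inf (hu w w.2).2.1 (hu w' w'.2).2.1) (hE.2 w.2 w'.2 (Subtype.coe_ne_coe.2 hne))

end DisjointFamilies

section MaximalFamilies

open Finset Module

variable {X : Type*} [AddCommGroup X] [Lattice X] [IsOrderedAddMonoid X] [Module ℝ X]
  [PosSMulMono ℝ X] {J : Submodule ℝ X} {E : Finset X}

lemma DisjointModulo.exists_sub_smul_mem (hJ : IsOrderIdeal J) (hJc : RUClosed (J : Set X))
    (hE : DisjointModulo J E) (hmax : ∀ F, DisjointModulo J F → #F ≤ #E) {w v : X} (hw : w ∈ E)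
    (hv : 0 ≤ v) (hvw : v ≤ w) : ∃ s : ℝ, 0 ≤ s ∧ v - s • w ∈ J := by
  classical
  obtain ⟨hw0, hwJ⟩ := hE.1 w hw
  refine hJ.exists_sub_smul_mem hJc hw0 hv hwJ fun r => ?_
  by_contra! h
  -- otherwise replacing `w` by the two parts of `v - r • w` gives a larger family
  set p := v - r • w
  have hp : |p| ≤ (1 + |r|) • w := calc
    |p| = |v + -(r • w)| := by simp only [p, sub_eq_add_neg]
    _ ≤ |v| + |-(r • w)| := abs_add_le _ _
    _ = v + |r| • w := by rw [abs_neg, abs_of_nonneg hv, abs_smul', abs_of_nonneg hw0]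
    _ ≤ (1 + |r|) • w := by rw [add_smul, one_smul]; exact add_le_add hvw le_rfl
  have hdisj : ∀ q, 0 ≤ q → q ≤ |p| → ∀ w' ∈ E.erase w, q ⊓ w' ∈ J := by
    intro q hq hqp w' hw'
    obtain ⟨hw'w, hw'E⟩ := mem_erase.1 hw'
    have h₁ := hJ.smul_inf_smul_mem (s := 1 + |r|) (by positivity) zero_le_one hw0
      (hE.1 w' hw'E).1 (hE.2 hw hw'E hw'w.symm)
    rw [one_smul] at h₁
    exact hJ.mem_of_nonneg_of_le (le_inf hq (hE.1 w' hw'E).1)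
      (inf_le_inf_right w' (hqp.trans hp)) h₁
  have h₁ := (hE.subset (erase_subset w E)).insert (negPart_nonneg p) h.2
    (hdisj _ (negPart_nonneg p) (negPart_le_abs p))
  have h₂ := h₁.1.insert (posPart_nonneg p) h.1 <| by
    simp only [mem_insert, forall_eq_or_imp, posPart_inf_negPart_eq_zero]
    exact ⟨J.zero_mem, hdisj _ (posPart_nonneg p) (posPart_le_abs p)⟩
  have h₃ := hmax _ h₂.1
  rw [h₂.2, h₁.2, card_erase_of_mem hw] at h₃
  have := card_pos.2 ⟨w, hw⟩
  omega

lemma DisjointModulo.posPart_sub_inf_mem (hJ : IsOrderIdeal J) (hJc : RUClosed (J : Set X))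
    (hE : DisjointModulo J E) (hmax : ∀ F, DisjointModulo J F → #F ≤ #E) {w x S : X} {t : ℝ}
    (hw : w ∈ E) (ht : IsGreatest {t : ℝ | 0 ≤ t ∧ (t • w - x)⁺ ∈ J} t) (htS : t • w ≤ S)
    (hS : (S - x)⁺ ∈ J) : (x - S)⁺ ⊓ w ∈ J := by
  obtain ⟨s, hs0, hsJ⟩ := hE.exists_sub_smul_mem hJ hJc hmax hw
    (le_inf (posPart_nonneg _) (hE.1 w hw).1) inf_le_right
  suffices hts : t + s ≤ t by
    obtain rfl : s = 0 := by linarith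
    simpa using hsJ
  refine ht.2 ⟨add_nonneg ht.1.1 hs0, hJ.posPart_mem_of_le ?_ (J.sub_mem hS hsJ)⟩
  have hSx : (S - x)⁺ - (x - S)⁺ = S - x := by
    rw [show x - S = -(S - x) by abel, posPart_neg, posPart_sub_negPart]
  calc (t + s) • w - x = t • w + (s • w - x) := by rw [add_smul]; abel
    _ ≤ S + (s • w - x) := add_le_add htS le_rfl
    _ = (S - x)⁺ - ((x - S)⁺ - s • w) := by
        rw [sub_sub_eq_add_sub, add_sub_right_comm, hSx]; abel
    _ ≤ (S - x)⁺ - ((x - S)⁺ ⊓ w - s • w) :=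
        sub_le_sub_left (sub_le_sub_right inf_le_left _) _

lemma DisjointModulo.mem_span_sup_of_nonneg (hJ : IsOrderIdeal J) (hJc : RUClosed (J : Set X))
    (hE : DisjointModulo J E) (hmax : ∀ F, DisjointModulo J F → #F ≤ #E) {x : X} (hx : 0 ≤ x) :
    x ∈ Submodule.span ℝ (E : Set X) ⊔ J := by
  classical
  choose! t ht using fun w (hw : w ∈ E) =>
    hJ.exists_isGreatest_posPart_smul_sub_mem hJc hx (hE.1 w hw).1 (hE.1 w hw).2
  set S := ∑ w ∈ E, t w • w
  have hterm : ∀ w ∈ E, 0 ≤ t w • w := fun w hw => smul_nonneg (ht w hw).1.1 (hE.1 w hw).1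
  have hS : (S - x)⁺ ∈ J := hJ.posPart_sum_sub_mem hterm hx (fun w hw => (ht w hw).1.2)
    fun w hw w' hw' hne => hJ.smul_inf_smul_mem (ht w hw).1.1 (ht w' hw').1.1 (hE.1 w hw).1
      (hE.1 w' hw').1 (hE.2 hw hw' hne)
  have hxS : (x - S)⁺ ∈ J := by
    by_contra h
    have h₁ := hE.insert (posPart_nonneg _) h fun w hw =>
      hE.posPart_sub_inf_mem hJ hJc hmax hw (ht w hw) (single_le_sum hterm hw) hS
    have h₂ := hmax _ h₁.1
    omega
  refine Submodule.mem_sup.2 ⟨S, Submodule.sum_mem _ fun w hw =>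
    Submodule.smul_mem _ _ (Submodule.subset_span hw), x - S, ?_, add_sub_cancel S x⟩
  rw [← posPart_sub_negPart (x - S), ← posPart_neg, neg_sub]
  exact J.sub_mem hxS hS

lemma DisjointModulo.span_sup_eq_top (hJ : IsOrderIdeal J) (hJc : RUClosed (J : Set X))
    (hE : DisjointModulo J E) (hmax : ∀ F, DisjointModulo J F → #F ≤ #E) :
    Submodule.span ℝ (E : Set X) ⊔ J = ⊤ :=
  eq_top_iff.2 fun x _ => posPart_sub_negPart x ▸
    Submodule.sub_mem _ (hE.mem_span_sup_of_nonneg hJ hJc hmax (posPart_nonneg x))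
      (hE.mem_span_sup_of_nonneg hJ hJc hmax (negPart_nonneg x))

end MaximalFamilies

theorem stmt18_general {X : Type*} [AddCommGroup X] [Lattice X]
    [CovariantClass X X (· + ·) (· ≤ ·)] [Module ℝ X] [PosSMulMono ℝ X] (Y : Submodule ℝ X)
    (hY : RUClosed (Y : Set X)) (hlat : IsVectorSublattice Y)
    (n : ℕ) (hfin : FiniteDimensional ℝ (X ⧸ Y)) (hn : Module.finrank ℝ (X ⧸ Y) = n) :
    ∃ J : Submodule ℝ X, J ≤ Y ∧ IsOrderIdeal J ∧ RUClosed (J : Set X) ∧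
      FiniteDimensional ℝ (X ⧸ J) ∧ Module.finrank ℝ (X ⧸ J) ≤ 2 * n := by
  have : IsOrderedAddMonoid X :=
    ⟨fun _ _ h c => add_le_add_left h c, fun _ _ h c => add_le_add_right h c⟩
  have hJ := Y.isOrderIdeal_idealCore
  have hJc := Y.ruClosed_idealCore hY
  obtain ⟨E, hE, hmax⟩ := Finset.exists_card_maximal (P := DisjointModulo Y.idealCore)
    ⟨by simp, by simp⟩ fun F hF => hF.card_le hlat
  obtain ⟨hfinJ, hrank⟩ :=
    Submodule.finrank_quotient_le_card (hE.span_sup_eq_top hJ hJc hmax)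
  exact ⟨Y.idealCore, Y.idealCore_le, hJ, hJc, hfinJ, hrank.trans (hn ▸ hE.card_le hlat)⟩

theorem stmt18 {X : Type*} [AddCommGroup X] [Lattice X]
    [CovariantClass X X (· + ·) (· ≤ ·)] [Module ℝ X] [PosSMulMono ℝ X] (hArch : ArchimedeanVL X) (Y : Submodule ℝ X)
    (hY : RUClosed (Y : Set X)) (hlat : IsVectorSublattice Y)
    (n : ℕ) (hfin : FiniteDimensional ℝ (X ⧸ Y)) (hn : Module.finrank ℝ (X ⧸ Y) = n) :
    ∃ J : Submodule ℝ X, J ≤ Y ∧ IsOrderIdeal J ∧ RUClosed (J : Set X) ∧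
      FiniteDimensional ℝ (X ⧸ J) ∧ Module.finrank ℝ (X ⧸ J) ≤ 2 * n :=
  stmt18_general Y hY hlat n hfin hn
end
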